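/- MGDA as projection yields a common descent direction with a margin unless Pareto-stationary: fix g_1, …, g_K ∈ ℝ^d, let Δ^K be the probability simplex, let λ* minimize ‖Σ_k λ_k g_k‖₂² over λ ∈ Δ^K, and set g_mix := Σ_k λ*_k g_k. Then: (i) g_mix is the Euclidean projection of the origin onto the convex hull C := conv{g_1, …, g_K}; (ii) if g_mix = 0 then 0 ∈ C; (iii) if g_mix ≠ 0 then ⟨g_k, −g_mix⟩ ≤ −‖g_mix‖₂² for all k, so −g_mix is a common descent direction. -/

import Mathlib

open BigOperators

/-!
The convex hull `C` of the `g k` is the image of the simplex under `μ ↦ ∑ k, μ k • g k`, so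
minimizing over the simplex is minimizing the norm over `C`, i.e. projecting `0` onto `C`. The
descent margin is the variational inequality `⟪g_mix, y - g_mix⟫ ≥ 0` (`y ∈ C`) that
characterizes this projection, taken at `y = g k`.
-/

theorem convexHull_range_eq_image_stdSimplex {R E ι : Type*} [Field R] [LinearOrder R]
    [IsStrictOrderedRing R] [AddCommGroup E] [Module R E] [Fintype ι] (v : ι → E) :
    convexHull R (Set.range v) = (fun w : ι → R ↦ ∑ i, w i • v i) '' stdSimplex R ι := by
  classical
  have hlin : (fun w : ι → R ↦ ∑ i, w i • v i) = Fintype.linearCombination R v := by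
    ext w
    simp [Fintype.linearCombination_apply]
  rw [← convexHull_basis_eq_stdSimplex, hlin, LinearMap.image_convexHull, ← Set.range_comp]
  congr 2
  ext i
  simp [Fintype.linearCombination_apply]

theorem Convex.norm_sq_le_inner_of_forall_norm_le {F : Type*} [NormedAddCommGroup F]
    [InnerProductSpace ℝ F] {s : Set F} (hs : Convex ℝ s) {x : F} (hx : x ∈ s)
    (hmin : ∀ y ∈ s, ‖x‖ ≤ ‖y‖) {y : F} (hy : y ∈ s) : ‖x‖ ^ 2 ≤ inner ℝ x y := by
  have hinf : ‖0 - x‖ = ⨅ w : s, ‖0 - (w : F)‖ := by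
    simp only [zero_sub, norm_neg]
    have : Nonempty s := ⟨⟨x, hx⟩⟩
    exact le_antisymm (le_ciInf fun w ↦ hmin w w.2)
      (ciInf_le (f := fun w : s ↦ ‖(w : F)‖) ⟨0, by rintro _ ⟨w, rfl⟩; positivity⟩ ⟨x, hx⟩)
  have hvar := (norm_eq_iInf_iff_real_inner_le_zero hs hx).1 hinf y hy
  rw [zero_sub, inner_neg_left, inner_sub_right, real_inner_self_eq_norm_sq] at hvar
  linarith

/-- MGDA as projection: the minimum-norm convex combination of gradients is the
projection of the origin onto the convex hull; it yields a common descent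
direction with margin unless it vanishes (Pareto stationarity). -/
theorem mgda_projection_common_descent
    {d K : ℕ} (g : Fin K → EuclideanSpace ℝ (Fin d))
    (lam : Fin K → ℝ) (hlam : lam ∈ stdSimplex ℝ (Fin K))
    (hmin : ∀ μ ∈ stdSimplex ℝ (Fin K),
      ‖∑ k, lam k • g k‖ ^ 2 ≤ ‖∑ k, μ k • g k‖ ^ 2)
    (gmix : EuclideanSpace ℝ (Fin d)) (hgmix : gmix = ∑ k, lam k • g k) :
    (gmix ∈ convexHull ℝ (Set.range g) ∧
      ∀ y ∈ convexHull ℝ (Set.range g), ‖gmix‖ ≤ ‖y‖) ∧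
    (gmix = 0 → (0 : EuclideanSpace ℝ (Fin d)) ∈ convexHull ℝ (Set.range g)) ∧
    (gmix ≠ 0 → ∀ k, (inner ℝ (g k) (-gmix) : ℝ) ≤ -‖gmix‖ ^ 2) := by
  have hC := convexHull_range_eq_image_stdSimplex (R := ℝ) g
  have hmem : gmix ∈ convexHull ℝ (Set.range g) := hC ▸ ⟨lam, hlam, hgmix.symm⟩
  have hproj : ∀ y ∈ convexHull ℝ (Set.range g), ‖gmix‖ ≤ ‖y‖ := by
    rw [hC]
    rintro _ ⟨μ, hμ, rfl⟩
    subst hgmix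
    exact (pow_le_pow_iff_left₀ (norm_nonneg _) (norm_nonneg _) two_ne_zero).1 (hmin μ hμ)
  refine ⟨⟨hmem, hproj⟩, fun h0 ↦ h0 ▸ hmem, fun _ k ↦ ?_⟩
  have hmargin := (convex_convexHull ℝ _).norm_sq_le_inner_of_forall_norm_le hmem hproj
    (subset_convexHull ℝ _ (Set.mem_range_self k))
  rw [inner_neg_right, real_inner_comm]
  linarith
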